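/- arXiv:1110.1923 — 2 statements merged into one kernel-verified Lean document; each statement's English description precedes it below -/
import Mathlib

section
/- Let L = L₁ × ℝⁿ where L₁ is a locally compact abelian group containing a compact open subgroup. A continuous endomorphism φ of L, written in matrix form (α β; γ δ) with α ∈ End(L₁), β ∈ Hom(ℝⁿ, L₁), γ ∈ Hom(L₁, ℝⁿ), δ ∈ End(ℝⁿ), is a topological automorphism of L if and only if α is a topological automorphism of L₁ and δ is a linear automorphism of ℝⁿ. -/
/-!
Every continuous homomorphism `ℝⁿ → L₁` has connected range containing `0`, hence lands in the
clopen subgroup `U`; composed with a continuous homomorphism `L₁ → ℝⁿ` it therefore has bounded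
range, so it vanishes. Consequently `γ ∘ ψ ∘ β = 0` for every continuous endomorphism `ψ` of
`L₁`, and the matrix `(α β; γ δ)` behaves like a triangular one: reading off the entries of
`φ⁻¹` inverts `α` and `δ`, and conversely block elimination writes down a continuous inverse of
`φ` from `α⁻¹` and a (linear, hence continuous) inverse of `δ`.
-/

/-- `f : M → M` is a topological automorphism: a group automorphism that is a
homeomorphism. -/
def IsTopAut {M : Type*} [AddCommGroup M] [TopologicalSpace M] (f : M → M) : Prop :=
  ∃ e : M ≃+ M, ⇑e = f ∧ Continuous ⇑e ∧ Continuous ⇑e.symm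

open Function

theorem AddMonoidHom.eq_zero_of_isBounded_range {M E : Type*} [AddMonoid M]
    [NormedAddCommGroup E] [NormedSpace ℝ E] (f : M →+ E)
    (hf : Bornology.IsBounded (Set.range f)) : f = 0 := by
  ext m
  obtain ⟨R, hR⟩ := isBounded_iff_forall_norm_le.1 hf
  have hmul : ∀ k : ℕ, (k : ℝ) * ‖f m‖ ≤ R := fun k => by
    simpa [← Nat.cast_smul_eq_nsmul ℝ, norm_smul] using hR _ ⟨k • m, rfl⟩
  by_contra hm
  have hpos : 0 < ‖f m‖ := norm_pos_iff.2 hm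
  obtain ⟨k, hk⟩ := exists_nat_gt (R / ‖f m‖)
  linarith [(div_lt_iff₀ hpos).1 hk, hmul k]

theorem AddMonoidHom.range_subset_of_isOpen {M G : Type*} [AddGroup M] [TopologicalSpace M]
    [PreconnectedSpace M] [AddGroup G] [TopologicalSpace G] [IsTopologicalAddGroup G]
    (U : AddSubgroup G) (hU : IsOpen (U : Set G)) (f : M →+ G) (hf : Continuous f) :
    Set.range f ⊆ U :=
  (isPreconnected_range hf).subset_isClopen ⟨U.isClosed_of_isOpen hU, hU⟩
    ⟨0, ⟨0, map_zero f⟩, U.zero_mem⟩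

theorem AddMonoidHom.comp_eq_zero_of_isCompact_of_isOpen {M G E : Type*} [AddGroup M]
    [TopologicalSpace M] [PreconnectedSpace M] [AddGroup G] [TopologicalSpace G]
    [IsTopologicalAddGroup G] [NormedAddCommGroup E] [NormedSpace ℝ E]
    (U : AddSubgroup G) (hUc : IsCompact (U : Set G)) (hUo : IsOpen (U : Set G))
    (f : M →+ G) (hf : Continuous f) (g : G →+ E) (hg : Continuous g) : g.comp f = 0 :=
  (g.comp f).eq_zero_of_isBounded_range <| (hUc.image hg).isBounded.subset <| by
    rw [coe_comp, Set.range_comp]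
    exact Set.image_mono (f.range_subset_of_isOpen U hUo hf)

theorem AddMonoidHom.exists_continuous_rightInverse {V W : Type*} [AddCommGroup V] [Module ℝ V]
    [TopologicalSpace V] [IsTopologicalAddGroup V] [ContinuousSMul ℝ V]
    [AddCommGroup W] [Module ℝ W] [TopologicalSpace W]
    [IsTopologicalAddGroup W] [ContinuousSMul ℝ W] [T2Space W] [FiniteDimensional ℝ W]
    (f : V →+ W) (hf : Continuous f) (hsurj : Surjective f) :
    ∃ g : W → V, Continuous g ∧ RightInverse g f := by
  obtain ⟨g, hg⟩ := (f.toRealLinearMap hf).exists_rightInverse_of_surjective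
    (LinearMap.range_eq_top.2 hsurj)
  exact ⟨g, g.continuous, fun w => congr($hg w)⟩

theorem isTopAut_of_injective_of_rightInverse {M : Type*} [AddCommGroup M] [TopologicalSpace M]
    (f : M →+ M) (hf : Continuous f) (hinj : Injective f) {g : M → M} (hg : Continuous g)
    (hfg : RightInverse g f) : IsTopAut f :=
  ⟨{ toFun := f
     invFun := g
     left_inv := hfg.leftInverse_of_injective hinj
     right_inv := hfg
     map_add' := map_add f }, rfl, hf, hg⟩

section BlockMatrix

variable {G V : Type*} [AddCommGroup G] [AddCommGroup V]
  (α : G →+ G) (β : V →+ G) (γ : G →+ V) (δ : V →+ V)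

def blockHom : G × V →+ G × V := (α.coprod β).prod (γ.coprod δ)

@[simp]
theorem coe_blockHom : ⇑(blockHom α β γ δ) = fun p => (α p.1 + β p.2, γ p.1 + δ p.2) := rfl

variable {α β γ δ} {ψ : G × V → G × V}

theorem bijective_of_blockHom_inverse (hl : LeftInverse ψ (blockHom α β γ δ))
    (hr : RightInverse ψ (blockHom α β γ δ))
    (hψβ : ∀ v, (ψ (β v, 0)).2 = 0) (hγψ : ∀ w, γ (ψ (0, w)).1 = 0) : Bijective δ := by
  refine ⟨(injective_iff_map_eq_zero δ).2 fun u hu => ?_, fun w => ⟨(ψ (0, w)).2, ?_⟩⟩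
  · have : ψ (β u, 0) = (0, u) := by simpa [hu] using hl (0, u)
    simpa [this] using hψβ u
  · simpa [hγψ] using congr_arg Prod.snd (hr (0, w))

theorem injective_of_blockHom_inverse (hl : LeftInverse ψ (blockHom α β γ δ))
    (hγψ : ∀ w, γ (ψ (0, w)).1 = 0) : Injective α := by
  refine (injective_iff_map_eq_zero α).2 fun x hx => ?_
  have hψ : ψ (0, γ x) = (x, 0) := by simpa [hx] using hl (x, 0)
  have hγx : γ x = 0 := by simpa [hψ] using hγψ (γ x)
  simpa using congr_arg Prod.fst (hl.injective (a₁ := (x, 0)) (a₂ := 0) (by simp [hx, hγx]))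

theorem rightInverse_of_blockHom_inverse (hr : RightInverse ψ (blockHom α β γ δ))
    (hψβ : ∀ v, (ψ (β v, 0)).2 = 0) :
    RightInverse (fun y => (ψ (y, 0)).1 + (ψ (β (ψ (y, 0)).2, 0)).1) α := by
  intro y
  -- `ψ (β v, 0)` lies in `G × {0}`, so the range of `β` is contained in that of `α`
  have hαβ : ∀ v, α (ψ (β v, 0)).1 = β v := fun v => by
    simpa [hψβ v] using congr_arg Prod.fst (hr (β v, 0))
  simpa [hαβ] using congr_arg Prod.fst (hr (y, 0))

theorem injective_blockHom (hα : Injective α) (hδ : Injective δ)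
    (hker : ∀ x v, α x = β v → γ x = 0) : Injective (blockHom α β γ δ) := by
  refine (injective_iff_map_eq_zero _).2 fun ⟨x, u⟩ h => ?_
  obtain ⟨h₁, h₂⟩ := Prod.mk_eq_zero.1 h
  have hγx : γ x = 0 := by simpa using hker (-x) u (by simpa [neg_eq_iff_add_eq_zero] using h₁)
  have hu : u = 0 := (injective_iff_map_eq_zero δ).1 hδ u (by simpa [hγx] using h₂)
  have hx : x = 0 := (injective_iff_map_eq_zero α).1 hα x (by simpa [hu] using h₁)
  simp [hx, hu]

-- Block elimination: `γ ∘ α⁻¹ ∘ β = 0`, so `α x + β u = y`, `γ x + δ u = w` is solved by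
-- `u = δ⁻¹ (w - γ (α⁻¹ y))` and `x = α⁻¹ y - α⁻¹ (β u)`.
theorem rightInverse_blockHom {α' : G → G} {δ' : V → V} (hα : RightInverse α' α)
    (hδ : RightInverse δ' δ) (hker : ∀ x v, α x = β v → γ x = 0) :
    RightInverse (fun p => (α' p.1 - α' (β (δ' (p.2 - γ (α' p.1)))), δ' (p.2 - γ (α' p.1))))
      (blockHom α β γ δ) := by
  intro ⟨y, w⟩
  have hγ : ∀ v, γ (α' (β v)) = 0 := fun v => hker _ v (hα (β v))
  simp [hα _, hδ _, hγ]

end BlockMatrix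

section CompactOpenSubgroup

variable {G V : Type*} [AddCommGroup G] [TopologicalSpace G] [IsTopologicalAddGroup G]
  [NormedAddCommGroup V] [NormedSpace ℝ V]
  {U : AddSubgroup G} {α : G →+ G} {β : V →+ G} {γ : G →+ V} {δ : V →+ V}

theorem isTopAut_and_bijective_of_isTopAut_blockHom (hUc : IsCompact (U : Set G))
    (hUo : IsOpen (U : Set G)) (hα : Continuous α) (hβ : Continuous β) (hγ : Continuous γ)
    (h : IsTopAut (blockHom α β γ δ)) : IsTopAut α ∧ Bijective δ := by
  obtain ⟨e, he, -, hsymm⟩ := h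
  have hl : LeftInverse e.symm (blockHom α β γ δ) := he ▸ e.symm_apply_apply
  have hr : RightInverse e.symm (blockHom α β γ δ) := he ▸ e.apply_symm_apply
  have hψβ : ∀ v, (e.symm (β v, 0)).2 = 0 := fun v =>
    DFunLike.congr_fun (AddMonoidHom.comp_eq_zero_of_isCompact_of_isOpen U hUc hUo β hβ
      ((AddMonoidHom.snd G V).comp (e.symm.toAddMonoidHom.comp (AddMonoidHom.inl G V)))
      (continuous_snd.comp (hsymm.comp (continuous_id.prodMk continuous_const)))) v
  have hγψ : ∀ w, γ (e.symm (0, w)).1 = 0 := fun w =>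
    DFunLike.congr_fun (AddMonoidHom.comp_eq_zero_of_isCompact_of_isOpen U hUc hUo
      ((AddMonoidHom.fst G V).comp (e.symm.toAddMonoidHom.comp (AddMonoidHom.inr G V)))
      (continuous_fst.comp (hsymm.comp (continuous_const.prodMk continuous_id))) γ hγ) w
  refine ⟨isTopAut_of_injective_of_rightInverse α hα (injective_of_blockHom_inverse hl hγψ)
    ?_ (rightInverse_of_blockHom_inverse hr hψβ), bijective_of_blockHom_inverse hl hr hψβ hγψ⟩
  fun_prop

theorem isTopAut_blockHom [FiniteDimensional ℝ V] (hUc : IsCompact (U : Set G))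
    (hUo : IsOpen (U : Set G)) (hα : Continuous α) (hβ : Continuous β) (hγ : Continuous γ)
    (hδ : Continuous δ) (hαaut : IsTopAut α) (hδbij : Bijective δ) :
    IsTopAut (blockHom α β γ δ) := by
  obtain ⟨e, he, -, hsymm⟩ := hαaut
  obtain ⟨δ', hδ'c, hδ'⟩ := δ.exists_continuous_rightInverse hδ hδbij.2
  have hker : ∀ x v, α x = β v → γ x = 0 := fun x v h => by
    have hx : x = e.symm (β v) := by rw [← h, ← he, e.symm_apply_apply]
    simpa [hx] using DFunLike.congr_fun (AddMonoidHom.comp_eq_zero_of_isCompact_of_isOpen U hUc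
      hUo (e.symm.toAddMonoidHom.comp β) (hsymm.comp hβ) γ hγ) v
  have hα' : RightInverse e.symm α := he ▸ e.apply_symm_apply
  refine isTopAut_of_injective_of_rightInverse _ (by rw [coe_blockHom]; fun_prop)
    (injective_blockHom (he ▸ e.injective) hδbij.1 hker) ?_ (rightInverse_blockHom hα' hδ' hker)
  fun_prop

end CompactOpenSubgroup

theorem stmt_13_general {L₁ : Type*} [AddCommGroup L₁] [TopologicalSpace L₁] [IsTopologicalAddGroup L₁]
    (U : AddSubgroup L₁) (hUc : IsCompact (U : Set L₁)) (hUo : IsOpen (U : Set L₁))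
    (n : ℕ)
    (α : L₁ →+ L₁) (hα : Continuous ⇑α)
    (β : (Fin n → ℝ) →+ L₁) (hβ : Continuous ⇑β)
    (γ : L₁ →+ (Fin n → ℝ)) (hγ : Continuous ⇑γ)
    (δ : (Fin n → ℝ) →+ (Fin n → ℝ)) (hδ : Continuous ⇑δ) :
    IsTopAut (fun p : L₁ × (Fin n → ℝ) => (α p.1 + β p.2, γ p.1 + δ p.2)) ↔
      (IsTopAut ⇑α ∧ Function.Bijective ⇑δ) :=
  ⟨isTopAut_and_bijective_of_isTopAut_blockHom hUc hUo hα hβ hγ,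
    fun h => isTopAut_blockHom hUc hUo hα hβ hγ hδ h.1 h.2⟩

/-- Let `L = L₁ × ℝⁿ` with `L₁` a locally compact abelian group containing a compact open
subgroup. A continuous endomorphism `φ` of `L` with matrix form `(α β; γ δ)`, i.e.
`φ(x, v) = (α x + β v, γ x + δ v)`, is a topological automorphism of `L` if and only if
`α` is a topological automorphism of `L₁` and `δ` is an automorphism of `ℝⁿ`. -/
theorem stmt_13 {L₁ : Type*} [AddCommGroup L₁] [TopologicalSpace L₁] [IsTopologicalAddGroup L₁]
    [T2Space L₁] [LocallyCompactSpace L₁]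
    (U : AddSubgroup L₁) (hUc : IsCompact (U : Set L₁)) (hUo : IsOpen (U : Set L₁))
    (n : ℕ)
    (α : L₁ →+ L₁) (hα : Continuous ⇑α)
    (β : (Fin n → ℝ) →+ L₁) (hβ : Continuous ⇑β)
    (γ : L₁ →+ (Fin n → ℝ)) (hγ : Continuous ⇑γ)
    (δ : (Fin n → ℝ) →+ (Fin n → ℝ)) (hδ : Continuous ⇑δ) :
    IsTopAut (fun p : L₁ × (Fin n → ℝ) => (α p.1 + β p.2, γ p.1 + δ p.2)) ↔
      (IsTopAut ⇑α ∧ Function.Bijective ⇑δ) :=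
  stmt_13_general U hUc hUo n α hα β hβ γ hγ δ hδ
end

section
/- Let C be an additive category in which every morphism has a kernel, and A = B ⊕ C an object such that (I) an endomorphism δ of C is an automorphism iff the zero morphism is a kernel of δ, and (II) γ∘β = 0 for every γ : B → C and β : C → B. Then an endomorphism φ = (α β; γ δ) of A (in matrix form via the biproduct) is an automorphism of A if and only if α is an automorphism of B and δ is an automorphism of C. -/
/-!
Condition (II) says that every composite `C ⟶ B ⟶ C` vanishes. Hence the lower-right entry of a
composite of matrices is the composite of the lower-right entries. For the upper-left entries, if
`a` is the upper-left entry of `φ⁻¹` then `α ≫ a = 𝟙 - n` with `n` factoring as `B ⟶ C ⟶ B`, so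
`n ≫ n = 0` and `α ≫ a` is invertible with inverse `𝟙 + n`; likewise `a ≫ α`. Conversely,
Gaussian elimination turns `(α γ; β δ)` into `diag(α, δ - β ≫ α⁻¹ ≫ γ) = diag(α, δ)`.
-/

open CategoryTheory CategoryTheory.Limits

namespace CategoryTheory

variable {𝒞 : Type*} [Category 𝒞]

theorem isIso_of_isIso_comp_of_isIso_comp {X Y : 𝒞} (f : X ⟶ Y) (g : Y ⟶ X)
    [IsIso (f ≫ g)] [IsIso (g ≫ f)] : IsIso f :=
  have : Mono f := mono_of_mono f g
  have : IsSplitEpi f := IsSplitEpi.mk' ⟨inv (g ≫ f) ≫ g, by simp⟩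
  isIso_of_mono_of_isSplitEpi f

variable [Preadditive 𝒞]

theorem isIso_id_sub_comp_of_comp_eq_zero {X Y : 𝒞} (u : X ⟶ Y) (v : Y ⟶ X) (h : v ≫ u = 0) :
    IsIso (𝟙 X - u ≫ v) :=
  ⟨𝟙 X + u ≫ v, by simp [reassoc_of% h], by simp [reassoc_of% h]⟩

variable [HasBinaryBiproducts 𝒞]

namespace Limits

variable {X₁ X₂ Y₁ Y₂ Z₁ Z₂ : 𝒞}

theorem biprod.inl_comp_comp_fst (f : X₁ ⊞ X₂ ⟶ Y₁ ⊞ Y₂) (g : Y₁ ⊞ Y₂ ⟶ Z₁ ⊞ Z₂) :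
    biprod.inl ≫ (f ≫ g) ≫ biprod.fst =
      (biprod.inl ≫ f ≫ biprod.fst) ≫ (biprod.inl ≫ g ≫ biprod.fst) +
        (biprod.inl ≫ f ≫ biprod.snd) ≫ (biprod.inr ≫ g ≫ biprod.fst) := by
  conv_lhs => rw [← Category.id_comp g, ← biprod.total]
  simp only [Preadditive.add_comp, Preadditive.comp_add, Category.assoc]

theorem biprod.inr_comp_comp_snd (f : X₁ ⊞ X₂ ⟶ Y₁ ⊞ Y₂) (g : Y₁ ⊞ Y₂ ⟶ Z₁ ⊞ Z₂) :
    biprod.inr ≫ (f ≫ g) ≫ biprod.snd =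
      (biprod.inr ≫ f ≫ biprod.fst) ≫ (biprod.inl ≫ g ≫ biprod.snd) +
        (biprod.inr ≫ f ≫ biprod.snd) ≫ (biprod.inr ≫ g ≫ biprod.snd) := by
  conv_lhs => rw [← Category.id_comp g, ← biprod.total]
  simp only [Preadditive.add_comp, Preadditive.comp_add, Category.assoc]

end Limits

variable {B C : 𝒞}

theorem isIso_ofComponents_of_comp_eq_zero (h : ∀ (γ : B ⟶ C) (β : C ⟶ B), β ≫ γ = 0)
    (α : B ⟶ B) (γ : B ⟶ C) (β : C ⟶ B) (δ : C ⟶ C) [IsIso α] [IsIso δ] :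
    IsIso (Biprod.ofComponents α γ β δ) := by
  set L := Biprod.unipotentLower (-β ≫ inv α)
  set R := Biprod.unipotentUpper (-inv α ≫ γ)
  have hdiag : L.hom ≫ Biprod.ofComponents α γ β δ ≫ R.hom = biprod.map α δ := by
    ext <;> simp [L, R, h]
  have hfactor : Biprod.ofComponents α γ β δ = L.inv ≫ biprod.map α δ ≫ R.inv := by
    simp [← hdiag]
  have : IsIso (biprod.map α δ) := (biprod.mapIso (asIso α) (asIso δ)).isIso_hom
  rw [hfactor]
  infer_instance

theorem isIso_inr_comp_comp_snd_of_isIso (h : ∀ (γ : B ⟶ C) (β : C ⟶ B), β ≫ γ = 0)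
    (φ : B ⊞ C ⟶ B ⊞ C) [IsIso φ] : IsIso (biprod.inr ≫ φ ≫ biprod.snd) := by
  refine ⟨biprod.inr ≫ inv φ ≫ biprod.snd, ?_, ?_⟩
  · have hcomp := biprod.inr_comp_comp_snd φ (inv φ)
    rw [h, zero_add, IsIso.hom_inv_id] at hcomp
    simpa using hcomp.symm
  · have hcomp := biprod.inr_comp_comp_snd (inv φ) φ
    rw [h, zero_add, IsIso.inv_hom_id] at hcomp
    simpa using hcomp.symm

theorem isIso_inl_comp_comp_fst_of_isIso (h : ∀ (γ : B ⟶ C) (β : C ⟶ B), β ≫ γ = 0)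
    (φ : B ⊞ C ⟶ B ⊞ C) [IsIso φ] : IsIso (biprod.inl ≫ φ ≫ biprod.fst) := by
  have hright := biprod.inl_comp_comp_fst φ (inv φ)
  have hleft := biprod.inl_comp_comp_fst (inv φ) φ
  simp only [IsIso.hom_inv_id, IsIso.inv_hom_id, Category.id_comp, biprod.inl_fst] at hright hleft
  rw [← sub_eq_iff_eq_add] at hright hleft
  have : IsIso (_ ≫ biprod.inl ≫ inv φ ≫ biprod.fst) :=
    hright ▸ isIso_id_sub_comp_of_comp_eq_zero _ _ (h _ _)
  have : IsIso ((biprod.inl ≫ inv φ ≫ biprod.fst) ≫ _) :=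
    hleft ▸ isIso_id_sub_comp_of_comp_eq_zero _ _ (h _ _)
  exact isIso_of_isIso_comp_of_isIso_comp _ (biprod.inl ≫ inv φ ≫ biprod.fst)

end CategoryTheory

theorem stmt_19_general {𝒞 : Type*} [Category 𝒞] [Preadditive 𝒞]
    [HasBinaryBiproducts 𝒞] (B C : 𝒞)
    (hII : ∀ (γ : B ⟶ C) (β : C ⟶ B), β ≫ γ = 0)
    (φ : B ⊞ C ⟶ B ⊞ C) :
    IsIso φ ↔
      (IsIso (biprod.inl ≫ φ ≫ biprod.fst) ∧ IsIso (biprod.inr ≫ φ ≫ biprod.snd)) := by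
  refine ⟨fun _ ↦ ⟨isIso_inl_comp_comp_fst_of_isIso hII φ, isIso_inr_comp_comp_snd_of_isIso hII φ⟩,
    fun ⟨_, _⟩ ↦ ?_⟩
  rw [← Biprod.ofComponents_eq φ]
  exact isIso_ofComponents_of_comp_eq_zero hII _ _ _ _

/-- Let `𝒞` be an additive category with kernels, and `A = B ⊕ C` an object such that
(I) an endomorphism `δ` of `C` is an automorphism iff the zero morphism is a kernel of `δ`
(i.e. `kernel.ι δ = 0`), and (II) `γ ∘ β = 0` for every `γ : B ⟶ C` and `β : C ⟶ B`.
Then an endomorphism `φ = (α β; γ δ)` of `A` (in matrix form via the biproduct) is an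
automorphism of `A` iff `α = π₁ φ ι₁` is an automorphism of `B` and `δ = π₂ φ ι₂` is an
automorphism of `C`. -/
theorem stmt_19 {𝒞 : Type*} [Category 𝒞] [Preadditive 𝒞] [HasZeroObject 𝒞]
    [HasBinaryBiproducts 𝒞] [HasKernels 𝒞] (B C : 𝒞)
    (hI : ∀ δ : C ⟶ C, IsIso δ ↔ kernel.ι δ = 0)
    (hII : ∀ (γ : B ⟶ C) (β : C ⟶ B), β ≫ γ = 0)
    (φ : B ⊞ C ⟶ B ⊞ C) :
    IsIso φ ↔
      (IsIso (biprod.inl ≫ φ ≫ biprod.fst) ∧ IsIso (biprod.inr ≫ φ ≫ biprod.snd)) :=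
  stmt_19_general B C hII φ
end
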